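/- Linear-quadratic verification (average-cost RSPIC): let A, Q, S, Σ be real n×n matrices with Q, Σ, S symmetric, Σ positive definite, and suppose S satisfies the algebraic Riccati equation 0 = Q + AᵀS + SA + (φ−ψ)·SΣS for real parameters φ ≠ ψ. Define z(x) = exp((φ−ψ)·½⟨x, Sx⟩), q(x) = ½⟨x, Qx⟩, a(x) = Ax, and χ = ½ trace(SΣ). Then z satisfies the linear PDE 0 = (φ−ψ)(q(x) − χ)·z(x) + ⟨a(x), ∇z(x)⟩ + ½ trace(Σ∇²z(x)) for all x ∈ ℝⁿ. -/

import Mathlib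

/-! With `c = φ - ψ`, the gradient of `z` is `c z Sx` and its Hessian is `c z S + c² z (Sx)(Sx)ᵀ`.
Hence the drift term is `c z ⟨Ax, Sx⟩` and the diffusion term is
`½ c z tr(SΣ) + ½ c² z ⟨Sx, ΣSx⟩`. The trace part cancels `χ`, and what remains is `c z / 2`
times `xᵀ(Q + AᵀS + SA + cSΣS)x`, which vanishes by the Riccati equation. -/

open Matrix Real

namespace Matrix

section Algebra

variable {ι R : Type*} [Fintype ι] [CommSemiring R]

lemma IsSymm.dotProduct_mulVec_eq {S : Matrix ι ι R} (hS : S.IsSymm) (v w : ι → R) :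
    v ⬝ᵥ S *ᵥ w = S *ᵥ v ⬝ᵥ w := by
  rw [dotProduct_mulVec, ← mulVec_transpose, hS]

lemma IsSymm.dotProduct_riccati_mulVec_self {A Q S Sig : Matrix ι ι R} (hS : S.IsSymm) (c : R)
    (x : ι → R) :
    x ⬝ᵥ (Q + Aᵀ * S + S * A + c • (S * Sig * S)) *ᵥ x
      = x ⬝ᵥ Q *ᵥ x + 2 * (A *ᵥ x ⬝ᵥ S *ᵥ x) + c * (S *ᵥ x ⬝ᵥ Sig *ᵥ S *ᵥ x) := by
  simp only [add_mulVec, smul_mulVec, ← mulVec_mulVec, dotProduct_add, dotProduct_smul,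
    smul_eq_mul, hS.dotProduct_mulVec_eq x, dotProduct_mulVec x Aᵀ, vecMul_transpose]
  rw [dotProduct_comm (S *ᵥ x) (A *ᵥ x)]
  ring

lemma sum_sum_mul_mul_eq_dotProduct_mulVec (M : Matrix ι ι R) (u : ι → R) :
    ∑ i, ∑ j, M i j * (u i * u j) = u ⬝ᵥ M *ᵥ u := by
  simp only [dotProduct, mulVec, Finset.mul_sum]
  exact Finset.sum_congr rfl fun i _ => Finset.sum_congr rfl fun j _ => by ring

end Algebra

variable {ι : Type*} [Fintype ι]

noncomputable def dotProductL : (ι → ℝ) →L[ℝ] (ι → ℝ) →L[ℝ] ℝ :=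
  (dotProductBilin ℝ ℝ).toContinuousBilinearMap

@[simp] lemma dotProductL_apply (v w : ι → ℝ) : dotProductL v w = v ⬝ᵥ w := rfl

lemma IsSymm.hasFDerivAt_dotProduct_mulVec_self {S : Matrix ι ι ℝ} (hS : S.IsSymm)
    (x : ι → ℝ) :
    HasFDerivAt (fun y => y ⬝ᵥ S *ᵥ y) ((2 : ℝ) • dotProductL (S *ᵥ x)) x := by
  have hlin : HasFDerivAt (S *ᵥ ·) S.mulVecLin.toContinuousLinearMap x :=
    S.mulVecLin.toContinuousLinearMap.hasFDerivAt
  refine (dotProductL.hasFDerivAt_of_bilinear (hasFDerivAt_id x) hlin).congr_fderiv ?_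
  ext v
  simp [two_smul, dotProduct_comm v, hS.dotProduct_mulVec_eq x]

end Matrix

noncomputable def expQuadForm {ι : Type*} [Fintype ι] (c : ℝ) (S : Matrix ι ι ℝ) (y : ι → ℝ) :
    ℝ :=
  exp (c * (1 / 2 * (y ⬝ᵥ S *ᵥ y)))

namespace Matrix.IsSymm

variable {ι : Type*} [Fintype ι] {S : Matrix ι ι ℝ}

lemma hasFDerivAt_expQuadForm (hS : S.IsSymm) (c : ℝ) (x : ι → ℝ) :
    HasFDerivAt (expQuadForm c S) ((c * expQuadForm c S x) • dotProductL (S *ᵥ x)) x := by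
  refine (((hS.hasFDerivAt_dotProduct_mulVec_self x).const_mul (1 / 2)).const_mul c).exp
    |>.congr_fderiv ?_
  rw [smul_smul, smul_smul, smul_smul, expQuadForm]
  ring_nf

lemma fderiv_expQuadForm_apply (hS : S.IsSymm) (c : ℝ) (x v : ι → ℝ) :
    fderiv ℝ (expQuadForm c S) x v = c * expQuadForm c S x * (S *ᵥ x ⬝ᵥ v) := by
  simp [(hS.hasFDerivAt_expQuadForm c x).fderiv]

lemma fderiv_fderiv_expQuadForm_single [DecidableEq ι] (hS : S.IsSymm) (c : ℝ) (x : ι → ℝ)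
    (i j : ι) :
    fderiv ℝ (fun y => fderiv ℝ (expQuadForm c S) y (Pi.single j 1)) x (Pi.single i 1)
      = c ^ 2 * expQuadForm c S x * ((S *ᵥ x) i * (S *ᵥ x) j) + c * expQuadForm c S x * S j i := by
  have hrow : HasFDerivAt (fun y => (S *ᵥ y) j) (dotProductL (S j)) x :=
    (dotProductL (S j)).hasFDerivAt
  have hprod : HasFDerivAt (fun y => c * expQuadForm c S y * (S *ᵥ y) j) _ x :=
    ((hS.hasFDerivAt_expQuadForm c x).const_mul c).mul hrow
  simp only [hS.fderiv_expQuadForm_apply, dotProduct_single_one]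
  rw [hprod.fderiv]
  simp only [_root_.add_apply, _root_.smul_apply, dotProductL_apply,
    dotProduct_single, mul_one, smul_eq_mul]
  ring

end Matrix.IsSymm

theorem stmt_8_general {n : ℕ}
    (A Q S Sig : Matrix (Fin n) (Fin n) ℝ)
    (hS : S.IsSymm)
    (φ ψ : ℝ)
    (hRiccati : 0 = Q + Aᵀ * S + S * A + (φ - ψ) • (S * Sig * S))
    (z : (Fin n → ℝ) → ℝ)
    (hz : z = fun x => Real.exp ((φ - ψ) * ((1 / 2) * (x ⬝ᵥ S.mulVec x))))
    (q : (Fin n → ℝ) → ℝ) (hq : q = fun x => (1 / 2) * (x ⬝ᵥ Q.mulVec x))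
    (χ : ℝ) (hχ : χ = (1 / 2) * (S * Sig).trace) :
    ∀ x : Fin n → ℝ,
      0 = (φ - ψ) * (q x - χ) * z x
        + (∑ i : Fin n, A.mulVec x i * fderiv ℝ z x (Pi.single i 1))
        + (1 / 2) * (∑ i : Fin n, ∑ j : Fin n,
            Sig i j * fderiv ℝ (fun y => fderiv ℝ z y (Pi.single j 1)) x (Pi.single i 1)) := by
  intro x
  set c := φ - ψ
  obtain rfl : z = expQuadForm c S := hz
  subst hq hχ
  have riccati : 0 = x ⬝ᵥ Q *ᵥ x + 2 * (A *ᵥ x ⬝ᵥ S *ᵥ x) + c * (S *ᵥ x ⬝ᵥ Sig *ᵥ S *ᵥ x) := by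
    rw [← hS.dotProduct_riccati_mulVec_self, ← hRiccati, zero_mulVec, dotProduct_zero]
  have drift : ∑ i, (A *ᵥ x) i * fderiv ℝ (expQuadForm c S) x (Pi.single i 1)
      = c * expQuadForm c S x * (A *ᵥ x ⬝ᵥ S *ᵥ x) := by
    simp only [hS.fderiv_expQuadForm_apply, dotProduct_single_one]
    rw [dotProduct, Finset.mul_sum]
    exact Finset.sum_congr rfl fun i _ => by ring
  have diffusion : ∑ i, ∑ j, Sig i j *
        fderiv ℝ (fun y => fderiv ℝ (expQuadForm c S) y (Pi.single j 1)) x (Pi.single i 1)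
      = c ^ 2 * expQuadForm c S x * (S *ᵥ x ⬝ᵥ Sig *ᵥ S *ᵥ x)
        + c * expQuadForm c S x * (S * Sig).trace := by
    rw [← sum_sum_mul_mul_eq_dotProduct_mulVec, trace_mul_comm]
    simp only [hS.fderiv_fderiv_expQuadForm_single, trace, diag, mul_apply, Finset.mul_sum,
      ← Finset.sum_add_distrib]
    exact Finset.sum_congr rfl fun i _ => Finset.sum_congr rfl fun j _ => by ring
  rw [drift, diffusion]
  linear_combination (c * expQuadForm c S x / 2) * riccati

/-- linear-quadratic verification for the average-cost linear HJB.
If `S` solves the Riccati equation `0 = Q + AᵀS + SA + (φ−ψ)SΣS`, then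
`z(x) = exp((φ−ψ)·½⟨x,Sx⟩)` solves
`0 = (φ−ψ)(q(x)−χ)z + ⟨Ax, ∇z⟩ + ½ tr(Σ∇²z)` with `q(x) = ½⟨x,Qx⟩` and
`χ = ½ tr(SΣ)`. -/
theorem stmt_8 {n : ℕ}
    (A Q S Sig : Matrix (Fin n) (Fin n) ℝ)
    (hQ : Q.IsSymm) (hS : S.IsSymm) (hSig : Sig.IsSymm) (hSigpd : Sig.PosDef)
    (φ ψ : ℝ) (hφψ : φ ≠ ψ)
    (hRiccati : 0 = Q + Aᵀ * S + S * A + (φ - ψ) • (S * Sig * S))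
    (z : (Fin n → ℝ) → ℝ)
    (hz : z = fun x => Real.exp ((φ - ψ) * ((1 / 2) * (x ⬝ᵥ S.mulVec x))))
    (q : (Fin n → ℝ) → ℝ) (hq : q = fun x => (1 / 2) * (x ⬝ᵥ Q.mulVec x))
    (χ : ℝ) (hχ : χ = (1 / 2) * (S * Sig).trace) :
    ∀ x : Fin n → ℝ,
      0 = (φ - ψ) * (q x - χ) * z x
        + (∑ i : Fin n, A.mulVec x i * fderiv ℝ z x (Pi.single i 1))
        + (1 / 2) * (∑ i : Fin n, ∑ j : Fin n,
            Sig i j * fderiv ℝ (fun y => fderiv ℝ z y (Pi.single j 1)) x (Pi.single i 1)) :=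
  stmt_8_general A Q S Sig hS φ ψ hRiccati z hz q hq χ hχ
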